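/- Suppose q is a rational prime and u is an integer with 0 < u < q. If q ∉ {2, 3}, then there exists a prime p₀ < 3·log q such that gcd(p₀, u) = 1. If q ∉ {2, 3, 7}, then there exists a prime p₀ < 2.1·log q such that gcd(p₀, u) = 1. -/

import Mathlib

/-!
If every prime below `T = 2.1 log q` divided `u`, so would their product `primorial m`,
`m = ⌈T⌉ - 1`, forcing `primorial m ≤ u < q`. This contradicts the Chebyshev-type bound
`21 θ(m) ≥ 10 (m + 1)` for `m ≥ 5`, which gives `primorial m ≥ exp (10 (m + 1) / 21) ≥ q`.
For `m ≥ 8100` that bound follows from Chebyshev's `θ(n) ≥ n log 2 - log (n + 1) - 2 √n log n`;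
below, the primorials are computed by the kernel. The constant `3` follows from `2.1`, except
for `q = 7`, which is checked by hand like `q = 5`.
-/

open Real Chebyshev

theorem primorial_succ_eq_ite (n : ℕ) :
    primorial (n + 1) =
      if Nat.Coprime (n + 1) (primorial n) then (n + 1) * primorial n else primorial n := by
  rcases n.eq_zero_or_pos with rfl | hn
  · decide
  have hcop : Nat.Coprime (n + 1) (primorial n) ↔ (n + 1).Prime := by
    refine ⟨fun h => ?_, fun hp => hp.coprime_iff_not_dvd.2 fun h => ?_⟩
    · by_contra hnp
      have hp := Nat.minFac_prime (n := n + 1) (by omega)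
      have hle : (n + 1).minFac ≤ n := by
        have := (Nat.not_prime_iff_minFac_lt (by omega)).1 hnp; omega
      exact hp.ne_one
        (Nat.eq_one_of_dvd_coprimes h (Nat.minFac_dvd _) (hp.dvd_primorial_iff.2 hle))
    · have := hp.dvd_primorial_iff.1 h; omega
  rw [primorial, Finset.range_add_one, Finset.filter_insert]
  by_cases hp : (n + 1).Prime
  · rw [if_pos hp, if_pos (hcop.2 hp)]
    exact Finset.prod_insert (by simp)
  · rw [if_neg hp, if_neg (mt hcop.1 hp)]
    rfl

/-- Started at `P = primorial m`, this checks `good n (primorial n)` for `m ≤ n < m + k`,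
getting each primorial from the previous one as in `primorial_succ_eq_ite`, so that kernel
evaluation needs only `gcd`s and no primality tests. -/
def checkPrimorials (good : ℕ → ℕ → Bool) : ℕ → ℕ → ℕ → Bool
  | 0, _, _ => true
  | k + 1, m, P => good m P &&
      checkPrimorials good k (m + 1) (if Nat.Coprime (m + 1) P then (m + 1) * P else P)

theorem checkPrimorials_spec {good : ℕ → ℕ → Bool} {k m : ℕ}
    (h : checkPrimorials good k m (primorial m) = true) {n : ℕ} (hmn : m ≤ n) (hnk : n < m + k) :
    good n (primorial n) = true := by
  induction k generalizing m with
  | zero => omega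
  | succ k ih =>
    rw [checkPrimorials, ← primorial_succ_eq_ite, Bool.and_eq_true] at h
    rcases hmn.eq_or_lt with rfl | hlt
    · exact h.1
    · exact ih h.2 hlt (by omega)

theorem exp_ten_lt : exp 10 < 22027 :=
  calc exp 10 = exp 1 ^ 10 := by rw [← exp_nat_mul]; norm_num
    _ < 2.7182818286 ^ 10 := by gcongr; exact exp_one_lt_d9
    _ < 22027 := by norm_num

theorem ten_mul_add_one_le_mul_theta_of_lt {m : ℕ} (hm : 5 ≤ m) (h : m < 8100) :
    10 * ((m : ℝ) + 1) ≤ 21 * θ m := by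
  have hcheck : checkPrimorials (fun n P => n < 5 || decide (22027 ^ (n + 1) ≤ P ^ 21))
      8100 0 (primorial 0) = true := by
    decide +kernel
  have hP : 22027 ^ (m + 1) ≤ primorial m ^ 21 := by
    simpa [hm.not_gt] using checkPrimorials_spec hcheck (Nat.zero_le m) (by omega)
  have hexp : exp (10 * ((m : ℝ) + 1)) ≤ (primorial m : ℝ) ^ 21 :=
    calc exp (10 * ((m : ℝ) + 1)) = exp 10 ^ (m + 1) := by
          rw [← exp_nat_mul]; push_cast; ring_nf
      _ ≤ 22027 ^ (m + 1) := by gcongr; exact exp_ten_lt.le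
      _ ≤ (primorial m : ℝ) ^ 21 := by exact_mod_cast hP
  have := log_le_log (exp_pos _) hexp
  rwa [log_exp, log_pow, ← Nat.floor_natCast (R := ℝ) m, ← theta_eq_log_primorial,
    Nat.floor_natCast] at this

theorem ten_mul_add_one_le_mul_theta_of_ge {n : ℕ} (hn : 8100 ≤ n) :
    10 * ((n : ℝ) + 1) ≤ 21 * θ n := by
  have hθ := theta_ge n
  set s := √(n : ℝ) with hs
  have hns : (n : ℝ) = s ^ 2 := (sq_sqrt (Nat.cast_nonneg _)).symm
  have hs90 : 90 ≤ s := le_sqrt_of_sq_le (by norm_num; exact_mod_cast hn)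
  have hlogn : log n = 2 * log s := by rw [hns, log_pow]; push_cast; ring
  have hlogn1 : log ((n : ℝ) + 1) ≤ log 2 + log n := by
    rw [← log_mul two_ne_zero (by positivity)]
    have hn1 : (1 : ℝ) ≤ n := Nat.one_le_cast.2 (by omega)
    exact log_le_log (by positivity) (by linarith)
  -- the tangent line of `log` at `exp 4 ≈ 55`, not far below the range `s ≥ 90`
  have hlogs : log s ≤ s / 54 + 3 := by
    have hconc := log_le_sub_one_of_pos (x := s / exp 4) (by positivity)
    rw [log_div (by positivity) (exp_pos _).ne', log_exp] at hconc
    have h54 : 54 ≤ exp 4 :=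
      calc (54 : ℝ) ≤ 2.7182818283 ^ 4 := by norm_num
        _ ≤ exp 1 ^ 4 := by gcongr; exact exp_one_gt_d9.le
        _ = exp 4 := by rw [← exp_nat_mul]; norm_num
    have : s / exp 4 ≤ s / 54 := div_le_div_of_nonneg_left (by linarith) (by norm_num) h54
    linarith
  have hlogs0 : 0 ≤ log s := log_nonneg (by linarith)
  rw [hlogn] at hθ hlogn1
  rw [hns] at hθ hlogn1 ⊢
  nlinarith [mul_le_mul_of_nonneg_left hlogs (by linarith : (0 : ℝ) ≤ s),
    mul_le_mul_of_nonneg_left log_two_gt_d9.le (sq_nonneg s),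
    mul_le_mul_of_nonneg_left hs90 (by linarith : (0 : ℝ) ≤ s), log_two_lt_d9]

theorem ten_mul_add_one_le_mul_theta {m : ℕ} (hm : 5 ≤ m) : 10 * ((m : ℝ) + 1) ≤ 21 * θ m :=
  (lt_or_ge m 8100).elim (ten_mul_add_one_le_mul_theta_of_lt hm) ten_mul_add_one_le_mul_theta_of_ge

theorem le_primorial_of_log_le {x : ℝ} {m : ℕ} (hm : 5 ≤ m) (hx : 0 < x)
    (h : 21 * log x ≤ 10 * (m + 1)) : x ≤ primorial m := by
  have hθ := ten_mul_add_one_le_mul_theta hm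
  rw [theta_eq_log_primorial, Nat.floor_natCast] at hθ
  exact (log_le_log_iff hx (by exact_mod_cast primorial_pos m)).1 (by linarith)

theorem exists_prime_lt_coprime_of_lt_primorial {T : ℝ} {m v : ℕ} (hmT : (m : ℝ) < T)
    (hv0 : 0 < v) (hv : v < primorial m) : ∃ p : ℕ, p.Prime ∧ (p : ℝ) < T ∧ Nat.Coprime p v := by
  by_contra! h
  have hdvd : primorial m ∣ v := by
    refine Finset.prod_primes_dvd _ (fun p hp => (Finset.mem_filter.1 hp).2.prime) fun p hp => ?_
    obtain ⟨hpm, hp⟩ := Finset.mem_filter.1 hp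
    have hpm : (p : ℝ) ≤ m := by exact_mod_cast Nat.lt_succ_iff.1 (Finset.mem_range.1 hpm)
    by_contra hpv
    exact h p hp (by linarith) (hp.coprime_iff_not_dvd.2 hpv)
  exact (Nat.le_of_dvd hv0 hdvd).not_gt hv

theorem mul_ten_lt_mul_log {x : ℝ} (hx : 0 < x) {a k : ℕ} (h : (22027 : ℝ) ^ a < x ^ k) :
    10 * (a : ℝ) < k * log x := by
  rw [← log_pow, lt_log_iff_exp_lt (by positivity), mul_comm, exp_nat_mul]
  exact (pow_le_pow_left₀ (exp_pos _).le exp_ten_lt.le a).trans_lt h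

theorem exists_prime_lt_mul_log_coprime {x : ℝ} (hx : 11 ≤ x) {v : ℕ} (hv0 : 0 < v)
    (hvx : (v : ℝ) < x) : ∃ p : ℕ, p.Prime ∧ (p : ℝ) < 2.1 * log x ∧ Nat.Coprime p v := by
  have hlog : 10 * ((5 : ℕ) : ℝ) < (21 : ℕ) * log x :=
    mul_ten_lt_mul_log (by linarith) ((by norm_num : (22027 : ℝ) ^ 5 < 11 ^ 21).trans_le
      (pow_le_pow_left₀ (by norm_num) hx 21))
  push_cast at hlog
  -- the primes below `2.1 * log x` are those `≤ m`
  set m := ⌈2.1 * log x⌉₊ - 1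
  have hceil : 6 ≤ ⌈2.1 * log x⌉₊ := Nat.lt_ceil.2 (by push_cast; linarith)
  have hm : m + 1 = ⌈2.1 * log x⌉₊ := by omega
  have hmT : (m : ℝ) < 2.1 * log x := Nat.lt_ceil.1 (by omega)
  have hTm : 2.1 * log x ≤ (m : ℝ) + 1 := by exact_mod_cast hm ▸ Nat.le_ceil (2.1 * log x)
  have hxm := le_primorial_of_log_le (x := x) (m := m) (by omega) (by linarith) (by linarith)
  exact exists_prime_lt_coprime_of_lt_primorial hmT hv0 (by exact_mod_cast hvx.trans_le hxm)

theorem Nat.Prime.eq_five_or_eq_seven_or_eleven_le {q : ℕ} (hq : q.Prime) (h2 : q ≠ 2)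
    (h3 : q ≠ 3) : q = 5 ∨ q = 7 ∨ 11 ≤ q := by
  by_contra! ⟨h5, h7, h11⟩
  interval_cases q <;> norm_num at *

theorem stmt_10 (q : ℕ) (hq : q.Prime) (u : ℤ) (hu0 : 0 < u) (huq : u < (q : ℤ)) :
    (q ≠ 2 → q ≠ 3 →
      ∃ p₀ : ℕ, p₀.Prime ∧ (p₀ : ℝ) < 3 * Real.log q ∧ Int.gcd (p₀ : ℤ) u = 1) ∧
    (q ≠ 2 → q ≠ 3 → q ≠ 7 →
      ∃ p₀ : ℕ, p₀.Prime ∧ (p₀ : ℝ) < 2.1 * Real.log q ∧ Int.gcd (p₀ : ℤ) u = 1) := by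
  lift u to ℕ using hu0.le
  norm_cast at hu0 huq
  simp only [Int.gcd_natCast_natCast]
  have hlog : 0 ≤ log (q : ℝ) := log_natCast_nonneg q
  have key : q = 5 ∨ 11 ≤ q → ∀ c : ℝ, 2.1 ≤ c →
      ∃ p : ℕ, p.Prime ∧ (p : ℝ) < c * log q ∧ Nat.Coprime p u := by
    intro hq c hc
    obtain ⟨p, hp, hpq, hpu⟩ : ∃ p : ℕ, p.Prime ∧ (p : ℝ) < 2.1 * log q ∧ Nat.Coprime p u := by
      rcases hq with rfl | hq
      · have hlog5 := mul_ten_lt_mul_log (x := 5) (a := 3) (k := 21) (by norm_num) (by norm_num)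
        refine exists_prime_lt_coprime_of_lt_primorial (m := 3) ?_ hu0 (huq.trans (by decide))
        push_cast at hlog5 ⊢; linarith
      · exact exists_prime_lt_mul_log_coprime (x := q) (by exact_mod_cast hq) hu0
          (by exact_mod_cast huq)
    exact ⟨p, hp, by nlinarith, hpu⟩
  refine ⟨fun h2 h3 => ?_, fun h2 h3 h7 => ?_⟩
  · rcases hq.eq_five_or_eq_seven_or_eleven_le h2 h3 with h | rfl | h
    · exact key (.inl h) 3 (by norm_num)
    · have hlog7 := mul_ten_lt_mul_log (x := 7) (a := 1) (k := 6) (by norm_num) (by norm_num)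
      refine exists_prime_lt_coprime_of_lt_primorial (m := 5) ?_ hu0 (huq.trans (by decide))
      push_cast at hlog7 ⊢; linarith
    · exact key (.inr h) 3 (by norm_num)
  · rcases hq.eq_five_or_eq_seven_or_eleven_le h2 h3 with h | h | h
    · exact key (.inl h) 2.1 le_rfl
    · exact absurd h h7
    · exact key (.inr h) 2.1 le_rfl
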